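/- For planar rooted trees T and T' and an ordered forest F of planar rooted trees, the coefficient of T' in the product B_+(F)∘T (asymmetric-shuffle/Grossman–Larson product of planar trees) equals the number of admissible cuts c of T' such that P^c(T') = F as an ordered forest and R^c(T') = T. Consequently the Hopf algebra (kP, ∘, Δ) is dual to the Foissy Hopf algebra H_F via the pairing (T,T') = δ_{T,T'}. -/

import Mathlib

/-! ### Planar rooted trees -/

/-- A planar rooted tree: a root with an ordered list of branches.
`PTree.node [T₁,…,T_k]` is `B₊(T₁⋯T_k)`; `PTree.node []` is the one-vertex tree `•`. -/
inductive PTree : Type where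
  | node : List PTree → PTree

instance : Inhabited PTree := ⟨.node []⟩

noncomputable instance : DecidableEq PTree := Classical.decEq _

/-! ### Dyck words and the shuffle product on planar rooted trees -/

namespace PTree

/-- The Dyck word (balanced bracket arrangement) of a planar rooted tree:
`word (B₊(T₁⋯T_k)) = ⟨w₁⟩⟨w₂⟩⋯⟨w_k⟩` where `wᵢ` is the word of `Tᵢ`
(with `true = ⟨` and `false = ⟩`). -/
def word : PTree → List Bool
  | .node l => (l.attach.map (fun x => true :: (word x.1 ++ [false]))).flatten
decreasing_by
  have h := List.sizeOf_lt_of_mem x.2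
  simp only [PTree.node.sizeOf_spec]
  omega

/-- The irreducible components `⟨w₁⟩,…,⟨w_k⟩` of the word of a planar rooted tree. -/
def blocks : PTree → List (List Bool)
  | .node l => l.map (fun t => true :: (word t ++ [false]))

end PTree

/-- All words obtained by shuffling the given blocks (kept atomic and in their
relative order) into the given word. -/
def shuffles : List (List Bool) → List Bool → List (List Bool)
  | [], w => [w]
  | b :: bs, [] => (shuffles bs []).map (b ++ ·)
  | b :: bs, x :: w =>
      ((shuffles bs (x :: w)).map (b ++ ·)) ++ ((shuffles (b :: bs) w).map (x :: ·))
termination_by bs w => bs.length + w.length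
decreasing_by all_goals simp +arith

/-- Stack-based parser turning a balanced word into the forest it represents. -/
def parseAux : List Bool → List (List PTree) → List PTree
  | [], stack => (stack.headD []).reverse
  | true :: w, stack => parseAux w ([] :: stack)
  | false :: w, stack =>
      match stack with
      | l :: l' :: rest => parseAux w ((PTree.node l.reverse :: l') :: rest)
      | _ => []

/-- The forest represented by a balanced word. -/
def parseForest (w : List Bool) : List PTree := parseAux w [[]]

/-- The planar rooted tree whose word is the given balanced word. -/
def parseTree (w : List Bool) : PTree := PTree.node (parseForest w)

/-- The product `∘` on `kP`: shuffle the irreducible components of the word of `T`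
into the word of `T'` (so `• ∘ T' = T'`). -/
noncomputable def pMul (k : Type*) [Semiring k] (T T' : PTree) : PTree →₀ k :=
  ((shuffles (PTree.blocks T) (PTree.word T')).map
    (fun w => Finsupp.single (parseTree w) (1 : k))).sum

/-- Bilinear extension of `∘` to `kP`. -/
noncomputable def pMulF {k : Type*} [CommSemiring k] (f g : PTree →₀ k) : PTree →₀ k :=
  f.sum (fun T a => g.sum (fun T' b => (a * b) • pMul k T T'))

/-! ### Cuts -/

/-- A decoration of (the edges of) a tree by Booleans: `true` means the edge
belongs to the cut. `Cut.node [(b₁,c₁),…,(b_k,c_k)]` matches a tree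
`PTree.node [t₁,…,t_k]`, with `bᵢ` decorating the edge from the root to `tᵢ`
and `cᵢ` a cut of `tᵢ`. -/
inductive Cut : Type where
  | node : List (Bool × Cut) → Cut

namespace Cut

mutual
/-- The number of edges in a cut. -/
def size : Cut → ℕ
  | .node l => sizeList l
/-- The number of edges in a list of decorated edges. -/
def sizeList : List (Bool × Cut) → ℕ
  | [] => 0
  | (b, c) :: cs => (if b then 1 else 0) + size c + sizeList cs
end

mutual
/-- The cut containing no edges. -/
def isEmpty : Cut → Bool
  | .node l => isEmptyList l
/-- Whether a list of decorated edges contains no cut edge. -/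
def isEmptyList : List (Bool × Cut) → Bool
  | [] => true
  | (b, c) :: cs => !b && isEmpty c && isEmptyList cs
end

mutual
/-- A cut is admissible if every path from the root to a leaf meets it at most
once, i.e. below a cut edge there is no further cut edge. -/
def admissible : Cut → Bool
  | .node l => admissibleList l
/-- Admissibility for a list of decorated edges. -/
def admissibleList : List (Bool × Cut) → Bool
  | [] => true
  | (b, c) :: cs => (if b then isEmpty c else admissible c) && admissibleList cs
end

end Cut

namespace PTree

mutual
/-- All cuts (edge subsets) of a planar rooted tree. -/
def cutsOf : PTree → List Cut
  | .node l => (cutsOfList l).map Cut.node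
/-- All decorations of a forest. -/
def cutsOfList : List PTree → List (List (Bool × Cut))
  | [] => [[]]
  | t :: ts =>
      (cutsOf t).flatMap (fun c =>
        (cutsOfList ts).flatMap (fun cs => [(true, c) :: cs, (false, c) :: cs]))
end

mutual
/-- `cutPieces t c = (R^c(t), P^c(t))`: the root component of `t` after removing
the edges of `c`, together with the ordered forest of the remaining components
(in planar depth-first order). -/
def cutPieces : PTree → Cut → PTree × List PTree
  | .node l, .node cs =>
      ((PTree.node (cutPiecesList l cs).1 : PTree), (cutPiecesList l cs).2)
/-- `cutPieces` for forests. -/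
def cutPiecesList : List PTree → List (Bool × Cut) → List PTree × List PTree
  | [], _ => ([], [])
  | _ :: _, [] => ([], [])
  | t :: ts, (b, c) :: cs =>
      let p := cutPieces t c
      let q := cutPiecesList ts cs
      if b then (q.1, (p.1 :: p.2) ++ q.2) else (p.1 :: q.1, p.2 ++ q.2)
end

/-- `R^c(T)`, the component containing the root. -/
def Rcut (t : PTree) (c : Cut) : PTree := (cutPieces t c).1

/-- `P^c(T)`, the ordered forest of components not containing the root. -/
def Pcut (t : PTree) (c : Cut) : List PTree := (cutPieces t c).2

end PTree

/-!
Both sides satisfy the same recursion in the target forest `node m :: ts` (`PTree.graftStep`),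
so they agree by induction on forests.

For cuts, the recursion is the case distinction on whether the edge above the first tree is
cut. For shuffles, one works with Dyck words. The word of `node m :: ts` is `⟨w_m⟩ w_ts`,
and a shuffle of the blocks of `F` into the word `⟨w_r⟩ w_L'` of `L` either begins with the first
block of `F`, or begins with the bracket `⟨` of `r`. In the second case, cutting at the matching
`⟩` splits it into a shuffle of an initial segment of the blocks into `w_r` and a shuffle of the
remaining blocks into `w_L'`. That bracket is found without ambiguity because a Dyck word has no
prefix of negative balance.
-/

theorem List.append_eq_iff_exists_take_drop {α : Type*} (u v l : List α) :
    u ++ v = l ↔ ∃ i ∈ Finset.range (l.length + 1), u = l.take i ∧ v = l.drop i := by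
  constructor
  · rintro rfl
    exact ⟨u.length, by simp, by simp, by simp⟩
  · rintro ⟨i, -, rfl, rfl⟩
    exact List.take_append_drop i l

namespace Multiset

variable {α β : Type*}

theorem count_product [DecidableEq α] [DecidableEq β] (s : Multiset α) (t : Multiset β) (a : α)
    (b : β) : (s ×ˢ t).count (a, b) = s.count a * t.count b := by
  induction s using Multiset.induction_on with
  | empty => simp
  | cons a' s ih =>
    rw [cons_product, count_add, ih, count_cons, add_mul, add_comm]
    congr 1
    by_cases h : a = a'
    · subst h
      rw [count_map_eq_count' _ _ (Prod.mk_right_injective a), if_pos rfl, one_mul]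
    · rw [if_neg h, zero_mul, count_eq_zero]
      simp [Ne.symm h]

theorem count_map_eq_sum_count [DecidableEq α] [DecidableEq β] {f : α → β} {y : β}
    (S : Finset α) {s : Multiset α} (hS : ∀ a ∈ s, f a = y ↔ a ∈ S) :
    (s.map f).count y = ∑ a ∈ S, s.count a := by
  induction s using Multiset.induction_on with
  | empty => simp
  | cons a s ih =>
    rw [map_cons, count_cons, ih fun x hx => hS x (mem_cons_of_mem hx)]
    simp only [count_cons, Finset.sum_add_distrib, Finset.sum_ite_eq', eq_comm (a := y)]
    congr 1
    exact if_congr (hS a (mem_cons_self a s)) rfl rfl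

theorem filter_product (p : α → Prop) (q : β → Prop) [DecidablePred p] [DecidablePred q]
    (s : Multiset α) (t : Multiset β) :
    (s ×ˢ t).filter (fun x => p x.1 ∧ q x.2) = s.filter p ×ˢ t.filter q := by
  induction s using Multiset.induction_on with
  | empty => simp
  | cons a s ih =>
    rw [cons_product, filter_add, ih, filter_map]
    by_cases ha : p a
    · simp [ha, filter_cons_of_pos, cons_product]
    · simp [ha, filter_cons_of_neg]

theorem map_product_map {γ δ : Type*} (f : α → γ) (g : β → δ) (s : Multiset α)
    (t : Multiset β) : s.map f ×ˢ t.map g = (s ×ˢ t).map (Prod.map f g) := by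
  induction s using Multiset.induction_on with
  | empty => simp
  | cons a s ih => simp [cons_product, ih]

theorem map_finset_sum {ι : Type*} (g : α → β) (S : Finset ι) (f : ι → Multiset α) :
    (∑ i ∈ S, f i).map g = ∑ i ∈ S, (f i).map g :=
  map_sum (mapAddMonoidHom g) f S

end Multiset

theorem Finsupp.list_sum_map_single_one_apply {α β k : Type*} [DecidableEq α] [Semiring k]
    (g : β → α) (l : List β) (a : α) :
    (l.map fun w => Finsupp.single (g w) (1 : k)).sum a =
      (((l : Multiset β).map g).count a : k) := by
  induction l with
  | nil => simp
  | cons w l ih =>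
    rw [List.map_cons, List.sum_cons, Finsupp.add_apply, ih, ← Multiset.cons_coe,
      Multiset.map_cons, Multiset.count_cons, Finsupp.single_apply]
    by_cases h : g w = a
    · simp [h, add_comm]
    · simp [h, Ne.symm h]

/-! ### Dyck words -/

def balance (w : List Bool) : ℤ := w.count true - w.count false

@[simp] theorem balance_nil : balance [] = 0 := rfl

@[simp] theorem balance_append (u v : List Bool) : balance (u ++ v) = balance u + balance v := by
  simp only [balance, List.count_append]
  push_cast
  ring

@[simp] theorem balance_cons (x : Bool) (w : List Bool) :
    balance (x :: w) = (if x then 1 else -1) + balance w := by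
  cases x <;> simp [balance] <;> ring

def PrefixBalanceAtLeast (c : ℤ) (w : List Bool) : Prop := ∀ p, p <+: w → c ≤ balance p

def IsDyck (w : List Bool) : Prop := balance w = 0 ∧ PrefixBalanceAtLeast 0 w

namespace PrefixBalanceAtLeast

variable {c : ℤ} {u v w : List Bool}

theorem nonpos (h : PrefixBalanceAtLeast c w) : c ≤ 0 := h [] List.nil_prefix

theorem mono {c' : ℤ} (hc : c' ≤ c) (h : PrefixBalanceAtLeast c w) :
    PrefixBalanceAtLeast c' w :=
  fun p hp => hc.trans (h p hp)

theorem nil (hc : c ≤ 0) : PrefixBalanceAtLeast c [] := by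
  intro p hp
  rw [List.prefix_nil.1 hp]
  exact hc

theorem cons_iff {x : Bool} :
    PrefixBalanceAtLeast c (x :: w) ↔
      c ≤ 0 ∧ PrefixBalanceAtLeast (c - if x then 1 else -1) w := by
  refine ⟨fun h => ⟨h.nonpos, fun p hp => ?_⟩, fun ⟨hc, h⟩ p hp => ?_⟩
  · have := h (x :: p) (List.cons_prefix_cons.2 ⟨rfl, hp⟩)
    simp only [balance_cons] at this
    linarith
  · rcases List.prefix_cons_iff.1 hp with rfl | ⟨q, rfl, hq⟩
    · exact hc
    · have := h q hq
      simp only [balance_cons]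
      linarith

theorem append (hu : PrefixBalanceAtLeast c u) (hv : PrefixBalanceAtLeast (c - balance u) v) :
    PrefixBalanceAtLeast c (u ++ v) := by
  rintro p ⟨q, hq⟩
  rcases List.append_eq_append_iff.1 hq with ⟨r, rfl, -⟩ | ⟨r, rfl, rfl⟩
  · exact hu p (List.prefix_append p r)
  · have := hv r (List.prefix_append r q)
    simp only [balance_append]
    linarith

theorem dyck_append (hu : IsDyck u) (hw : PrefixBalanceAtLeast c w) :
    PrefixBalanceAtLeast c (u ++ w) :=
  (hu.2.mono hw.nonpos).append (by simpa [hu.1] using hw)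

end PrefixBalanceAtLeast

open PrefixBalanceAtLeast

namespace IsDyck

theorem nil : IsDyck [] := ⟨rfl, .nil le_rfl⟩

theorem append {u v : List Bool} (hu : IsDyck u) (hv : IsDyck v) : IsDyck (u ++ v) :=
  ⟨by simp [hu.1, hv.1], hu.2.append (by simpa [hu.1] using hv.2)⟩

theorem wrap {d : List Bool} (hd : IsDyck d) : IsDyck (true :: (d ++ [false])) := by
  refine ⟨by simp [hd.1], cons_iff.2 ⟨le_rfl, (hd.2.mono (by norm_num)).append ?_⟩⟩
  exact cons_iff.2 ⟨by simp [hd.1], .nil (by simp [hd.1])⟩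

/-- The shorter of `u` and `s`, followed by its closing bracket, would be a prefix of the longer
one of negative balance. -/
theorem eq_of_append_false_eq {u s x y : List Bool} (hu : IsDyck u) (hs : IsDyck s)
    (h : u ++ false :: x = s ++ false :: y) : u = s ∧ x = y := by
  have not_lt : ∀ {u s x y : List Bool}, IsDyck u → IsDyck s →
      u ++ false :: x = s ++ false :: y → ¬ u.length < s.length := by
    intro u s x y hu hs h hlt
    have hpre : u ++ [false] <+: s :=
      List.prefix_of_prefix_length_le (by rw [← h]; simp) (List.prefix_append s _)
        (by simp only [List.length_append, List.length_cons, List.length_nil]; omega)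
    have := hs.2 _ hpre
    simp [hu.1] at this
  have hlen : u.length = s.length := by
    have := not_lt hu hs h
    have := not_lt hs hu h.symm
    omega
  obtain ⟨rfl, hxy⟩ := List.append_inj h hlen
  exact ⟨rfl, (List.cons.inj hxy).2⟩

end IsDyck

theorem exists_eq_append_false_of_balance_lt : ∀ (x : List Bool) {c : ℤ}, c ≤ 0 →
    (∃ p, p <+: x ∧ balance p < c) →
      ∃ d y, x = d ++ false :: y ∧ PrefixBalanceAtLeast c d ∧ balance d = c
  | [], c, hc, ⟨p, hp, hlt⟩ => by
    rw [List.prefix_nil.1 hp] at hlt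
    exact absurd hc (by simpa using hlt)
  | x :: xs, c, hc, ⟨p, hp, hlt⟩ => by
    rcases List.prefix_cons_iff.1 hp with rfl | ⟨q, rfl, hq⟩
    · exact absurd hc (by simpa using hlt)
    have hq' : balance q < c - if x then 1 else -1 := by
      simp only [balance_cons] at hlt
      linarith
    by_cases hstop : x = false ∧ c = 0
    · obtain ⟨rfl, rfl⟩ := hstop
      exact ⟨[], xs, rfl, .nil le_rfl, rfl⟩
    have hc' : c - (if x then 1 else -1) ≤ 0 := by
      cases x
      · have : c ≠ 0 := fun h0 => hstop ⟨rfl, h0⟩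
        simp only [Bool.false_eq_true, ↓reduceIte]
        omega
      · simp only [↓reduceIte]
        omega
    obtain ⟨d, y, rfl, hd, hbal⟩ := exists_eq_append_false_of_balance_lt xs hc' ⟨q, hq, hq'⟩
    exact ⟨x :: d, y, rfl, cons_iff.2 ⟨hc, hd⟩, by simp [hbal]⟩

theorem IsDyck.exists_eq_cons {w : List Bool} (hw : IsDyck w) (hne : w ≠ []) :
    ∃ d y, w = true :: (d ++ false :: y) ∧ IsDyck d ∧ IsDyck y := by
  obtain ⟨x, xs, rfl⟩ := List.exists_cons_of_ne_nil hne
  obtain ⟨hc, hxs⟩ := cons_iff.1 hw.2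
  cases x
  · exact absurd hxs.nonpos (by norm_num)
  obtain ⟨d, y, rfl, hd, hbal⟩ := exists_eq_append_false_of_balance_lt xs (le_refl 0)
    ⟨xs, List.prefix_rfl, by have := hw.1; simp only [balance_cons, ↓reduceIte] at this; linarith⟩
  refine ⟨d, y, rfl, ⟨hbal, hd⟩, ?_, ?_⟩
  · have := hw.1
    simp only [balance_cons, balance_append, hbal, Bool.false_eq_true, ↓reduceIte] at this
    linarith
  · intro q hq
    have := hw.2 (true :: (d ++ false :: q)) <| List.cons_prefix_cons.2
      ⟨rfl, (List.prefix_append_right_inj d).2 (List.cons_prefix_cons.2 ⟨rfl, hq⟩)⟩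
    simp only [balance_cons, balance_append, hbal] at this
    simpa using this

/-! ### Words of forests -/

namespace PTree

theorem forest_induction {motive : List PTree → Prop} (nil : motive [])
    (cons : ∀ m ts, motive m → motive ts → motive (node m :: ts)) : ∀ l, motive l
  | [] => nil
  | node m :: ts => cons m ts (forest_induction nil cons m) (forest_induction nil cons ts)

def block (t : PTree) : List Bool := true :: (word t ++ [false])

def forestWord (l : List PTree) : List Bool := (l.map block).flatten

theorem blocks_node (l : List PTree) : blocks (node l) = l.map block := rfl

theorem word_node (l : List PTree) : word (node l) = forestWord l := by
  rw [word, List.map_attach_eq_pmap]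
  simp only [List.pmap_eq_map]
  rfl

@[simp] theorem forestWord_nil : forestWord [] = [] := rfl

theorem forestWord_cons (t : PTree) (ts : List PTree) :
    forestWord (t :: ts) = block t ++ forestWord ts := rfl

theorem forestWord_node_cons (m ts : List PTree) :
    forestWord (node m :: ts) = true :: (forestWord m ++ false :: forestWord ts) := by
  simp [forestWord_cons, block, word_node]

theorem isDyck_forestWord : ∀ l, IsDyck (forestWord l) :=
  forest_induction .nil fun m ts hm hts => by
    rw [forestWord_cons, block, word_node]
    exact hm.wrap.append hts

theorem isDyck_block (t : PTree) : IsDyck (block t) := by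
  obtain ⟨m⟩ := t
  rw [block, word_node]
  exact (isDyck_forestWord m).wrap

theorem forall_mem_map_block_isDyck (F : List PTree) : ∀ b ∈ F.map block, IsDyck b := by
  simp only [List.mem_map]
  rintro _ ⟨t, -, rfl⟩
  exact isDyck_block t

theorem parseAux_forestWord_append : ∀ (l : List PTree) (rest : List Bool) (top : List PTree)
    (stack : List (List PTree)),
    parseAux (forestWord l ++ rest) (top :: stack) = parseAux rest ((l.reverse ++ top) :: stack) :=
  forest_induction (fun _ _ _ => rfl) fun m ts hm hts rest top stack => by
    rw [forestWord_node_cons, List.cons_append, parseAux, List.append_assoc, hm, List.cons_append,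
      parseAux, hts]
    simp

theorem parseForest_forestWord (l : List PTree) : parseForest (forestWord l) = l := by
  rw [parseForest, ← List.append_nil (forestWord l), parseAux_forestWord_append, parseAux]
  simp

theorem forestWord_injective : Function.Injective forestWord :=
  Function.LeftInverse.injective parseForest_forestWord

theorem parseTree_forestWord (l : List PTree) : parseTree (forestWord l) = node l := by
  rw [parseTree, parseForest_forestWord]

theorem block_append_inj {f g : PTree} {y z : List Bool} (h : block f ++ y = block g ++ z) :
    f = g ∧ y = z := by
  obtain ⟨a⟩ := f
  obtain ⟨b⟩ := g
  simp only [block, word_node, List.cons_append, List.append_assoc, List.cons.injEq,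
    true_and] at h
  obtain ⟨hab, rfl⟩ := (isDyck_forestWord a).eq_of_append_false_eq (isDyck_forestWord b) h
  exact ⟨congrArg node (forestWord_injective hab), rfl⟩

theorem count_map_block_append (f t : PTree) (z : List Bool) (X : Multiset (List Bool)) :
    (X.map (block f ++ ·)).count (block t ++ z) = if f = t then X.count z else 0 := by
  split_ifs with h
  · rw [h, Multiset.count_map_eq_count' _ _ (List.append_right_injective _)]
  · rw [Multiset.count_eq_zero, Multiset.mem_map]
    rintro ⟨y, -, hy⟩
    exact h (block_append_inj hy).1

end PTree

theorem IsDyck.exists_forestWord_eq {w : List Bool} (hw : IsDyck w) :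
    ∃ l, PTree.forestWord l = w := by
  induction h : w.length using Nat.strong_induction_on generalizing w with
  | _ n ih =>
  rcases eq_or_ne w [] with rfl | hne
  · exact ⟨[], rfl⟩
  obtain ⟨d, y, rfl, hd, hy⟩ := hw.exists_eq_cons hne
  obtain ⟨m, rfl⟩ := ih _ (by simp only [List.length_cons, List.length_append] at h; omega) hd rfl
  obtain ⟨ts, rfl⟩ := ih _ (by simp only [List.length_cons, List.length_append] at h; omega) hy rfl
  exact ⟨.node m :: ts, PTree.forestWord_node_cons m ts⟩

/-! ### Shuffles -/

theorem shuffles_nil_right (bs : List (List Bool)) : shuffles bs [] = [bs.flatten] := by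
  induction bs with
  | nil => rw [shuffles]; rfl
  | cons b bs ih => rw [shuffles, ih]; rfl

theorem ne_nil_of_mem_shuffles_cons {b : List Bool} {bs : List (List Bool)} {v w : List Bool}
    (hb : b ≠ []) (hw : w ∈ shuffles (b :: bs) v) : w ≠ [] := by
  rintro rfl
  cases v <;> simp [shuffles, hb] at hw

theorem PrefixBalanceAtLeast.of_mem_shuffles {bs : List (List Bool)} (hbs : ∀ b ∈ bs, IsDyck b)
    {v : List Bool} {c : ℤ} (hv : PrefixBalanceAtLeast c v) {w : List Bool}
    (hw : w ∈ shuffles bs v) : PrefixBalanceAtLeast c w := by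
  induction bs, v using shuffles.induct generalizing c w with
  | case1 v =>
    rw [shuffles, List.mem_singleton] at hw
    rwa [hw]
  | case2 b bs ih =>
    rw [shuffles] at hw
    obtain ⟨w', hw', rfl⟩ := List.mem_map.1 hw
    exact dyck_append (hbs b (by simp)) (ih (fun b' hb' => hbs b' (by simp [hb'])) hv hw')
  | case3 b bs x v ih₁ ih₂ =>
    rw [shuffles, List.mem_append] at hw
    rcases hw with hw | hw <;> obtain ⟨w', hw', rfl⟩ := List.mem_map.1 hw
    · exact dyck_append (hbs b (by simp)) (ih₁ (fun b' hb' => hbs b' (by simp [hb'])) hv hw')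
    · obtain ⟨hc, hv⟩ := cons_iff.1 hv
      exact cons_iff.2 ⟨hc, ih₂ hbs hv hw'⟩

theorem balance_of_mem_shuffles {bs : List (List Bool)} (hbs : ∀ b ∈ bs, balance b = 0)
    {v w : List Bool} (hw : w ∈ shuffles bs v) : balance w = balance v := by
  induction bs, v using shuffles.induct generalizing w with
  | case1 v =>
    rw [shuffles, List.mem_singleton] at hw
    rw [hw]
  | case2 b bs ih =>
    rw [shuffles] at hw
    obtain ⟨w', hw', rfl⟩ := List.mem_map.1 hw
    simp [hbs b (by simp), ih (fun b' hb' => hbs b' (by simp [hb'])) hw']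
  | case3 b bs x v ih₁ ih₂ =>
    rw [shuffles, List.mem_append] at hw
    rcases hw with hw | hw <;> obtain ⟨w', hw', rfl⟩ := List.mem_map.1 hw
    · simp [hbs b (by simp), ih₁ (fun b' hb' => hbs b' (by simp [hb'])) hw']
    · simp [ih₂ hbs hw']

theorem IsDyck.of_mem_shuffles {bs : List (List Bool)} (hbs : ∀ b ∈ bs, IsDyck b)
    {v w : List Bool} (hv : IsDyck v) (hw : w ∈ shuffles bs v) : IsDyck w :=
  ⟨(balance_of_mem_shuffles (fun b hb => (hbs b hb).1) hw).trans hv.1,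
    hv.2.of_mem_shuffles hbs hw⟩

def splices (x : Bool) (A B : Multiset (List Bool)) : Multiset (List Bool) :=
  (A ×ˢ B).map fun p => p.1 ++ x :: p.2

theorem splices_singleton_left (x : Bool) (a : List Bool) (B : Multiset (List Bool)) :
    splices x {a} B = B.map (a ++ x :: ·) := by
  rw [splices, ← Multiset.cons_zero, Multiset.cons_product, Multiset.zero_product, add_zero,
    Multiset.map_map]
  rfl

theorem splices_add_left (x : Bool) (A A' B : Multiset (List Bool)) :
    splices x (A + A') B = splices x A B + splices x A' B := by
  rw [splices, Multiset.add_product, Multiset.map_add]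
  rfl

theorem splices_map_append_left (x : Bool) (u : List Bool) (A B : Multiset (List Bool)) :
    splices x (A.map (u ++ ·)) B = (splices x A B).map (u ++ ·) := by
  induction A using Multiset.induction_on with
  | empty => simp [splices]
  | cons a A ih =>
    rw [Multiset.map_cons, ← Multiset.singleton_add, ← Multiset.singleton_add, splices_add_left,
      splices_add_left, ih, Multiset.map_add, splices_singleton_left, splices_singleton_left,
      Multiset.map_map]
    simp

theorem splices_map_cons_left (x y : Bool) (A B : Multiset (List Bool)) :
    splices x (A.map (y :: ·)) B = (splices x A B).map (y :: ·) :=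
  splices_map_append_left x [y] A B

/-- Cutting a shuffle of `bs` into `s ++ x :: v` at the letter `x` of the base word: the blocks
before it were shuffled into `s`, the others into `v`. -/
theorem shuffles_append_cons (bs : List (List Bool)) (s : List Bool) (x : Bool) (v : List Bool) :
    (shuffles bs (s ++ x :: v) : Multiset (List Bool)) =
      ∑ i ∈ Finset.range (bs.length + 1),
        splices x (shuffles (bs.take i) s) (shuffles (bs.drop i) v) := by
  induction bs, s using shuffles.induct with
  | case1 s => simp [shuffles, splices_singleton_left]
  | case2 b bs ih =>
    rw [List.nil_append] at ih ⊢
    rw [shuffles, Finset.sum_range_succ', ← Multiset.coe_add, ← Multiset.map_coe,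
      ← Multiset.map_coe, ih, Multiset.map_finset_sum]
    congr 1
    · refine Finset.sum_congr rfl fun i _ => ?_
      simp only [List.take_succ_cons, List.drop_succ_cons, shuffles, ← Multiset.map_coe,
        splices_map_append_left]
    · simp [shuffles, splices_singleton_left]
  | case3 b bs y s ih₁ ih₂ =>
    have hsplit := fun (w : List Bool) => Finset.sum_range_succ'
      (fun i => splices x (shuffles ((b :: bs).take i) w) (shuffles ((b :: bs).drop i) v))
      (bs.length + 1)
    rw [List.cons_append, shuffles, ← Multiset.coe_add, ← Multiset.map_coe, ← Multiset.map_coe,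
      ← List.cons_append, ih₁, ih₂, List.length_cons, hsplit, hsplit]
    simp only [List.take_succ_cons, List.drop_succ_cons, List.take_zero, List.drop_zero,
      shuffles.eq_1, shuffles.eq_3, ← Multiset.map_coe, ← Multiset.coe_add, splices_add_left,
      splices_map_append_left, splices_map_cons_left, Finset.sum_add_distrib, Multiset.map_add,
      Multiset.map_finset_sum, Multiset.coe_singleton, splices_singleton_left, Multiset.map_map]
    rw [add_assoc]
    rfl

theorem count_splices_false {A B : Multiset (List Bool)} (hA : ∀ a ∈ A, IsDyck a) {u : List Bool}
    (hu : IsDyck u) (w : List Bool) :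
    (splices false A B).count (u ++ false :: w) = A.count u * B.count w := by
  rw [splices, Multiset.count_map_eq_sum_count {(u, w)}, Finset.sum_singleton,
    Multiset.count_product]
  rintro ⟨a, c⟩ hac
  rw [Finset.mem_singleton, Prod.mk.injEq]
  exact ⟨(hA a (Multiset.mem_product.1 hac).1).eq_of_append_false_eq hu, by rintro ⟨rfl, rfl⟩; rfl⟩

/-! ### The grafting recursion -/

namespace PTree

/-- Both `shuffleCount` and `cutCount` satisfy `N (node m :: ts) = graftStep N m ts`: the first
tree `node m` of the target is either the first tree of `F`, or grows out of the first tree of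
`L` by grafting an initial segment of `F` onto it. -/
noncomputable def graftStep (N : List PTree → List PTree → List PTree → ℕ) (m ts F L : List PTree) :
    ℕ :=
  (match F with
    | [] => 0
    | f :: F' => if f = node m then N ts F' L else 0) +
  (match L with
    | [] => 0
    | node r :: L' => ∑ i ∈ Finset.range (F.length + 1), N m (F.take i) r * N ts (F.drop i) L')

theorem graftStep_congr {N N' : List PTree → List PTree → List PTree → ℕ} {m ts : List PTree}
    (hm : N m = N' m) (hts : N ts = N' ts) : graftStep N m ts = graftStep N' m ts := by
  funext F L
  simp only [graftStep, hm, hts]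

noncomputable def shuffleCount (l F L : List PTree) : ℕ :=
  (shuffles (F.map block) (forestWord L) : Multiset (List Bool)).count (forestWord l)

theorem shuffleCount_nil_middle (l L : List PTree) :
    shuffleCount l [] L = if L = l then 1 else 0 := by
  simp [shuffleCount, shuffles, Multiset.count_singleton, forestWord_injective.eq_iff, eq_comm]

theorem shuffleCount_nil_left (F L : List PTree) :
    shuffleCount [] F L = if F = [] ∧ L = [] then 1 else 0 := by
  cases F with
  | nil => simp [shuffleCount_nil_middle]
  | cons f F =>
    rw [if_neg (by simp), shuffleCount, Multiset.count_eq_zero, Multiset.mem_coe]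
    exact fun h => ne_nil_of_mem_shuffles_cons (by simp [block]) h rfl

theorem shuffleCount_nil_right (l F : List PTree) :
    shuffleCount l F [] = if F = l then 1 else 0 := by
  simp [shuffleCount, shuffles_nil_right, ← forestWord.eq_def, Multiset.count_singleton,
    forestWord_injective.eq_iff, eq_comm]

theorem count_shuffles_append_false (F m ts r L' : List PTree) :
    (shuffles (F.map block) (forestWord r ++ false :: forestWord L') : Multiset (List Bool)).count
        (forestWord m ++ false :: forestWord ts) =
      ∑ i ∈ Finset.range (F.length + 1),
        shuffleCount m (F.take i) r * shuffleCount ts (F.drop i) L' := by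
  rw [shuffles_append_cons, Multiset.count_sum', List.length_map]
  refine Finset.sum_congr rfl fun i _ => ?_
  rw [count_splices_false _ (isDyck_forestWord m), shuffleCount, shuffleCount, List.map_take,
    List.map_drop]
  exact fun a ha => IsDyck.of_mem_shuffles
    (fun b hb => forall_mem_map_block_isDyck F b (List.mem_of_mem_take hb))
    (isDyck_forestWord r) (Multiset.mem_coe.1 ha)

theorem shuffleCount_node_cons (m ts F L : List PTree) :
    shuffleCount (node m :: ts) F L = graftStep shuffleCount m ts F L := by
  match L, F with
  | [], F =>
    cases F <;> simp [graftStep, shuffleCount_nil_right, ite_and]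
  | node r :: L', [] =>
    by_cases r = m <;> simp_all [graftStep, shuffleCount_nil_middle]
  | node r :: L', f :: F =>
    have hgraft : (Multiset.map (true :: ·)
        (shuffles ((f :: F).map block) (forestWord r ++ false :: forestWord L'))).count
          (forestWord (node m :: ts)) =
        ∑ i ∈ Finset.range ((f :: F).length + 1),
          shuffleCount m ((f :: F).take i) r * shuffleCount ts ((f :: F).drop i) L' := by
      rw [forestWord_node_cons, Multiset.count_map_eq_count' _ _ List.cons_injective,
        count_shuffles_append_false]
    rw [shuffleCount, List.map_cons, forestWord_node_cons r L', shuffles.eq_3,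
      ← forestWord_node_cons r L', ← List.map_cons, ← Multiset.coe_add, Multiset.count_add,
      ← Multiset.map_coe, ← Multiset.map_coe, hgraft, forestWord_cons (node m),
      count_map_block_append]
    rfl

/-! ### Cuts -/

theorem coe_cutsOfList_cons (t : PTree) (ts : List PTree) :
    (cutsOfList (t :: ts) : Multiset (List (Bool × Cut))) =
      ((cutsOf t : Multiset Cut) ×ˢ (cutsOfList ts : Multiset _)).map
          (fun p => (true, p.1) :: p.2) +
        ((cutsOf t : Multiset Cut) ×ˢ (cutsOfList ts : Multiset _)).map
          (fun p => (false, p.1) :: p.2) := by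
  simp only [cutsOfList, ← Multiset.coe_bind, Multiset.product, SProd.sprod, Multiset.map_bind,
    ← Multiset.bind_add, Multiset.map_map]
  have hpair : ∀ x y : List (Bool × Cut), (↑[x, y] : Multiset _) = {x} + {y} := fun _ _ => rfl
  simp only [hpair, Multiset.bind_add, Multiset.bind_singleton, Function.comp_def]

theorem map_cutPieces_filter_cutsOf_node (m : List PTree) {p : Cut → Bool}
    {q : List (Bool × Cut) → Bool} (hpq : ∀ cs, p (Cut.node cs) = q cs) :
    ((cutsOf (node m) : Multiset Cut).filter (p · = true)).map (cutPieces (node m)) =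
      (((cutsOfList m : Multiset _).filter (q · = true)).map (cutPiecesList m)).map
        fun r => (node r.1, r.2) := by
  rw [cutsOf, ← Multiset.map_coe, Multiset.filter_map, Multiset.map_map, Multiset.map_map]
  simp only [Function.comp_def, hpq]
  rfl

theorem map_cutPiecesList_filter_isEmptyList : ∀ l : List PTree,
    ((cutsOfList l : Multiset _).filter (Cut.isEmptyList · = true)).map (cutPiecesList l) =
      {(l, [])} :=
  forest_induction (by rw [cutsOfList]; rfl) fun m ts hm hts => by
    have hroot : ((cutsOf (node m) : Multiset Cut).filter (Cut.isEmpty · = true)).map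
        (cutPieces (node m)) = {(node m, [])} := by
      rw [map_cutPieces_filter_cutsOf_node m fun cs => by rw [Cut.isEmpty], hm]
      rfl
    calc _ = (((cutsOf (node m) : Multiset Cut).filter (Cut.isEmpty · = true)) ×ˢ
            ((cutsOfList ts : Multiset _).filter (Cut.isEmptyList · = true))).map
              fun p => cutPiecesList (node m :: ts) ((false, p.1) :: p.2) := by
          rw [coe_cutsOfList_cons, Multiset.filter_add, Multiset.filter_map, Multiset.filter_map,
            ← Multiset.filter_product]
          simp [Function.comp_def, Cut.isEmptyList]
      _ = (((cutsOf (node m) : Multiset Cut).filter (Cut.isEmpty · = true)).map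
              (cutPieces (node m)) ×ˢ
            ((cutsOfList ts : Multiset _).filter (Cut.isEmptyList · = true)).map
              (cutPiecesList ts)).map fun p => (p.1.1 :: p.2.1, p.1.2 ++ p.2.2) := by
          rw [Multiset.map_product_map, Multiset.map_map]
          rfl
      _ = _ := by
          rw [hroot, hts]
          rfl

theorem map_cutPieces_filter_isEmpty_node (m : List PTree) :
    ((cutsOf (node m) : Multiset Cut).filter (Cut.isEmpty · = true)).map (cutPieces (node m)) =
      {(node m, [])} := by
  rw [map_cutPieces_filter_cutsOf_node m fun cs => by rw [Cut.isEmpty],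
    map_cutPiecesList_filter_isEmptyList]
  rfl

noncomputable def admissiblePieces (l : List PTree) : Multiset (List PTree × List PTree) :=
  ((cutsOfList l : Multiset _).filter (Cut.admissibleList · = true)).map (cutPiecesList l)

theorem admissiblePieces_node_cons (m ts : List PTree) :
    admissiblePieces (node m :: ts) =
      (admissiblePieces ts).map (fun q => (q.1, node m :: q.2)) +
        (admissiblePieces m ×ˢ admissiblePieces ts).map
          fun pq => (node pq.1.1 :: pq.2.1, pq.1.2 ++ pq.2.2) := by
  rw [admissiblePieces, coe_cutsOfList_cons, Multiset.filter_add, Multiset.filter_map,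
    Multiset.filter_map, Multiset.map_add, Multiset.map_map, Multiset.map_map]
  simp only [Function.comp_def, Cut.admissibleList, if_true, Bool.false_eq_true, if_false,
    Bool.and_eq_true]
  rw [Multiset.filter_product (Cut.isEmpty · = true) (Cut.admissibleList · = true),
    Multiset.filter_product (Cut.admissible · = true) (Cut.admissibleList · = true)]
  congr 1
  · calc _ = (((cutsOf (node m) : Multiset Cut).filter (Cut.isEmpty · = true)).map
              (cutPieces (node m)) ×ˢ admissiblePieces ts).map
                fun p => (p.2.1, (p.1.1 :: p.1.2) ++ p.2.2) := by
          rw [admissiblePieces, Multiset.map_product_map, Multiset.map_map]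
          rfl
      _ = _ := by
          rw [map_cutPieces_filter_isEmpty_node, ← Multiset.cons_zero, Multiset.cons_product,
            Multiset.zero_product, add_zero, Multiset.map_map]
          rfl
  · calc _ = (((cutsOf (node m) : Multiset Cut).filter (Cut.admissible · = true)).map
              (cutPieces (node m)) ×ˢ admissiblePieces ts).map
                fun p => (p.1.1 :: p.2.1, p.1.2 ++ p.2.2) := by
          rw [admissiblePieces, Multiset.map_product_map, Multiset.map_map]
          rfl
      _ = _ := by
          rw [map_cutPieces_filter_cutsOf_node m fun cs => by rw [Cut.admissible],
            ← admissiblePieces, ← Multiset.map_id (admissiblePieces ts),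
            Multiset.map_product_map, Multiset.map_map, Multiset.map_id]
          rfl

noncomputable def cutCount (l F L : List PTree) : ℕ := (admissiblePieces l).count (L, F)

theorem cutCount_nil_left (F L : List PTree) :
    cutCount [] F L = if F = [] ∧ L = [] then 1 else 0 := by
  have : admissiblePieces [] = {([], [])} := by rw [admissiblePieces, cutsOfList]; rfl
  simp [cutCount, this, Multiset.count_singleton, and_comm]

theorem cutCount_node_cons (m ts F L : List PTree) :
    cutCount (node m :: ts) F L = graftStep cutCount m ts F L := by
  rw [cutCount, admissiblePieces_node_cons, Multiset.count_add, graftStep.eq_def]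
  congr 1
  · match F with
    | [] => simp
    | f :: F' =>
      dsimp only
      split_ifs with hf
      · subst hf
        exact Multiset.count_map_eq_count' (fun q : List PTree × List PTree => (q.1, node m :: q.2))
          _ (fun p q h => by simpa [Prod.ext_iff] using h) (L, F')
      · simp [Ne.symm hf]
  · match L with
    | [] => simp
    | node r :: L' =>
      dsimp only
      have hinj : Set.InjOn (fun i => ((r, F.take i), (L', F.drop i)))
          (Finset.range (F.length + 1) : Set ℕ) := by
        intro i hi j hj h
        simp only [Finset.coe_range, Set.mem_Iio, Prod.mk.injEq] at hi hj h
        simpa [Nat.lt_succ_iff.1 hi, Nat.lt_succ_iff.1 hj] using congrArg List.length h.1.2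
      rw [Multiset.count_map_eq_sum_count _ fun pq _ => ?_, Finset.sum_image hinj]
      · simp only [Multiset.count_product, cutCount]
      · obtain ⟨⟨a, b⟩, c, d⟩ := pq
        simp only [Prod.mk.injEq, List.cons.injEq, node.injEq, Finset.mem_image,
          List.append_eq_iff_exists_take_drop]
        constructor
        · rintro ⟨⟨rfl, rfl⟩, i, hi, rfl, rfl⟩
          exact ⟨i, hi, ⟨rfl, rfl⟩, rfl, rfl⟩
        · rintro ⟨i, hi, ⟨rfl, rfl⟩, rfl, rfl⟩
          exact ⟨⟨rfl, rfl⟩, i, hi, rfl, rfl⟩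

theorem shuffleCount_eq_cutCount : ∀ l F L, shuffleCount l F L = cutCount l F L :=
  forest_induction (fun F L => by rw [shuffleCount_nil_left, cutCount_nil_left])
    fun m ts hm hts F L => by
      rw [shuffleCount_node_cons, cutCount_node_cons, graftStep_congr (funext₂ hm) (funext₂ hts)]

theorem pMul_node_apply_node (k : Type*) [Semiring k] (F L l : List PTree) :
    pMul k (node F) (node L) (node l) = (shuffleCount l F L : k) := by
  rw [pMul, Finsupp.list_sum_map_single_one_apply, blocks_node, word_node,
    Multiset.count_map_eq_sum_count {forestWord l}, Finset.sum_singleton, shuffleCount]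
  intro w hw
  obtain ⟨M, rfl⟩ := (IsDyck.of_mem_shuffles (forall_mem_map_block_isDyck F)
    (isDyck_forestWord L) (Multiset.mem_coe.1 hw)).exists_forestWord_eq
  rw [parseTree_forestWord, Finset.mem_singleton, forestWord_injective.eq_iff, node.injEq]

theorem length_filter_cutsOf_node (F L l : List PTree) :
    ((cutsOf (node l)).filter fun c => Cut.admissible c && decide (Pcut (node l) c = F) &&
        decide (Rcut (node l) c = node L)).length = cutCount l F L := by
  rw [cutsOf, List.filter_map, List.length_map, cutCount, admissiblePieces, Multiset.count_map,
    Multiset.filter_filter, Multiset.filter_coe, Multiset.coe_card]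
  congr 1
  refine List.filter_congr fun cs _ => ?_
  simp only [Function.comp_apply, Pcut, Rcut, cutPieces, Cut.admissible, node.injEq,
    Prod.ext_iff, Bool.decide_and, Bool.decide_eq_true]
  rw [Bool.and_comm, Bool.and_assoc, Bool.and_comm (Cut.admissibleList cs)]
  simp only [eq_comm]

end PTree

/-- Theorem 4 of the paper, key identity.  For planar rooted
trees `T, T'` and an ordered forest `F`, the coefficient of `T'` in
`B₊(F) ∘ T` equals the number of admissible cuts `c` of `T'` such that
`P^c(T') = F` (as an ordered forest) and `R^c(T') = T`.  (This is the identity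
from which it follows that `(kP, ∘, Δ)` is dual to the Foissy Hopf algebra
`H_F` via the pairing `(T,T') = δ_{T,T'}`.) -/
theorem planar_gl_coefficient_eq_cut_count (k : Type*) [Field k] [CharZero k]
    (F : List PTree) (T T' : PTree) :
    (pMul k (PTree.node F) T) T'
      = (((PTree.cutsOf T').filter (fun c =>
            Cut.admissible c && decide (PTree.Pcut T' c = F)
              && decide (PTree.Rcut T' c = T))).length : k) := by
  obtain ⟨L⟩ := T
  obtain ⟨l⟩ := T'
  rw [PTree.pMul_node_apply_node, PTree.length_filter_cutsOf_node, PTree.shuffleCount_eq_cutCount]
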